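/- Let T be a rooted phylogenetic X-tree whose positive edge lengths satisfy the ultrametric condition, and let k be a branching value of T. Then the number m(T,k) of size-k maxPD sets of T equals the product, over the k connected components κ₁(k),…,κ_k(k) of the forest T[R(d_k)], of the number λ(κ_i(k)) of leaves in each component: m(T,k) = ∏_{i=1}^{k} λ(κ_i(k)). -/

import Mathlib

/-!
Rooted phylogenetic `X`-trees with positive edge lengths.

A tree on a finite vertex type `V` is encoded by its parent function: the root
has no parent, every other vertex has one, and iterating the parent function
reaches the root.  The edge into a non-root vertex `v` has length `len v`, and
`hgt v` is the distance from the root to `v`.  Leaves are the vertices with no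
children; the taxon set `X` of the paper is the set `leaves` of leaves.
Every non-leaf, non-root vertex has out-degree (number of children) at least 2.
-/

noncomputable section

attribute [local instance] Classical.propDecidable

structure PhyloTree (V : Type) [Fintype V] [DecidableEq V] where
  root : V
  parent : V → Option V
  len : V → ℝ
  hgt : V → ℝ
  parent_root : parent root = none
  parent_isSome : ∀ v, v ≠ root → (parent v).isSome
  reaches_root : ∀ v, Relation.ReflTransGen (fun a b => parent a = some b) v root
  hgt_root : hgt root = 0
  hgt_eq : ∀ v u, parent v = some u → hgt v = hgt u + len v
  len_pos : ∀ v, v ≠ root → 0 < len v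
  outdeg_ge_two : ∀ v, v ≠ root → (∃ u, parent u = some v) →
    2 ≤ Set.ncard {u | parent u = some v}

namespace PhyloTree

variable {V : Type} [Fintype V] [DecidableEq V]

/-- `T.step a b` : `b` is the parent of `a`. -/
def step (T : PhyloTree V) (a b : V) : Prop := T.parent a = some b

/-- `T.anc u v` : `u` is an ancestor of `v`, i.e. `u` lies on the (unique) path
from the root to `v` (reflexively). -/
def anc (T : PhyloTree V) (u v : V) : Prop := Relation.ReflTransGen T.step v u

/-- a leaf is a vertex with no children. -/
def IsLeaf (T : PhyloTree V) (v : V) : Prop := ∀ u, T.parent u ≠ some v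

/-- the leaf set (the taxon set `X`). -/
def leaves (T : PhyloTree V) : Set V := {v | T.IsLeaf v}

/-- Phylogenetic diversity of a set `Y`: the total length of all edges `e`
whose set of descendant leaves meets `Y` (the edge into a non-root vertex `v`
has length `T.len v`). -/
def PD (T : PhyloTree V) (Y : Set V) : ℝ :=
  ∑ v : V, if v ≠ T.root ∧ ∃ x ∈ Y, T.IsLeaf x ∧ T.anc v x then T.len v else 0

/-- the ultrametric condition: all leaves are at the same distance from the root. -/
def Ultrametric (T : PhyloTree V) : Prop :=
  ∀ x y, T.IsLeaf x → T.IsLeaf y → T.hgt x = T.hgt y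

/-- `R d`: the set of vertices within distance `d` above some leaf. -/
def R (T : PhyloTree V) (d : ℝ) : Set V :=
  {v | ∃ x, T.IsLeaf x ∧ T.anc v x ∧ T.hgt x - T.hgt v ≤ d}

/-- adjacency in the forest induced by `T` on a vertex set `S`. -/
def adjIn (T : PhyloTree V) (S : Set V) (u v : V) : Prop :=
  u ∈ S ∧ v ∈ S ∧ (T.parent u = some v ∨ T.parent v = some u)

/-- the connected components of the forest induced by `T` on `S`. -/
def components (T : PhyloTree V) (S : Set V) : Set (Set V) :=
  {C | ∃ v ∈ S, C = S ∩ {u | Relation.ReflTransGen (T.adjIn S) v u}}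

/-- `c d`: the number of connected components of the forest `T[R(d)]`. -/
def ccount (T : PhyloTree V) (d : ℝ) : ℕ := (T.components (T.R d)).ncard

/-- `k` is a branching value if `T[R(d)]` has exactly `k` components for some `d ≥ 0`. -/
def IsBranchingValue (T : PhyloTree V) (k : ℕ) : Prop := ∃ d : ℝ, 0 ≤ d ∧ T.ccount d = k

/-- the branching distance `d_k = min {d : c(d) = k}`. -/
def branchDist (T : PhyloTree V) (k : ℕ) : ℝ := sInf {d | 0 ≤ d ∧ T.ccount d = k}

/-- `k⁻`: the largest branching value `≤ k`. -/
def kminus (T : PhyloTree V) (k : ℕ) : ℕ := sSup {j | j ≤ k ∧ T.IsBranchingValue j}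

/-- `k⁺`: the smallest branching value `≥ k`. -/
def kplus (T : PhyloTree V) (k : ℕ) : ℕ := sInf {j | k ≤ j ∧ T.IsBranchingValue j}

/-- `A` is a size-`k` maxPD set. -/
def IsMaxPD (T : PhyloTree V) (k : ℕ) (A : Set V) : Prop :=
  A ⊆ T.leaves ∧ A.ncard = k ∧ ∀ Y ⊆ T.leaves, Y.ncard = k → T.PD Y ≤ T.PD A

/-- `A` is a size-`k` minPD set. -/
def IsMinPD (T : PhyloTree V) (k : ℕ) (A : Set V) : Prop :=
  A ⊆ T.leaves ∧ A.ncard = k ∧ ∀ Y ⊆ T.leaves, Y.ncard = k → T.PD A ≤ T.PD Y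

/-- `m T k`: the number of size-`k` maxPD sets of `T`. -/
def m (T : PhyloTree V) (k : ℕ) : ℕ := {A : Set V | T.IsMaxPD k A}.ncard

/-- `T` is binary: every non-leaf vertex has exactly two children. -/
def Binary (T : PhyloTree V) : Prop :=
  ∀ v, ¬ T.IsLeaf v → Set.ncard {u | T.parent u = some v} = 2

end PhyloTree

/-!
Put `d = d_k`. The components of `T[R(d)]` are the clades below the vertices `r ∈ R(d)` whose
parent lies outside `R(d)`, and they partition the leaves. A `k`-set of leaves missing some
component must meet another one twice; moving one of those two leaves into the missed component
gains the path from the new leaf up to the parent of that component's top, of length `> d`, and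
loses at most the path from the removed leaf up to its component's top, of length `≤ d`. Hence
every maxPD set meets each component exactly once. Conversely, by ultrametricity, exchanging the
leaf chosen in one component does not change PD, so all these transversals have the same PD and
all of them are maxPD sets; there are `∏ λ(κᵢ)` of them.
-/

section Transversal

variable {α : Type*} {𝒞 : Finset (Set α)} {L A B : Set α}

def IsTransversal (𝒞 : Finset (Set α)) (L A : Set α) : Prop :=
  A ⊆ L ∧ ∀ C ∈ 𝒞, ∃ a, A ∩ C = {a}

lemma ncard_eq_sum_ncard_inter [Finite α] (h𝒞 : (𝒞 : Set (Set α)).PairwiseDisjoint id)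
    (hA : A ⊆ ⋃₀ 𝒞) : A.ncard = ∑ C ∈ 𝒞, (A ∩ C).ncard := by
  have hUnion : A = ⋃ C ∈ (𝒞 : Set (Set α)), A ∩ C := by
    rw [← Set.inter_iUnion₂, ← Set.sUnion_eq_biUnion, Set.inter_eq_left.mpr hA]
  rw [← finsum_mem_coe_finset, ← Set.Finite.ncard_biUnion (s := fun C => A ∩ C)
    𝒞.finite_toSet (fun _ _ => Set.toFinite _)
    (h𝒞.mono_on fun _ _ => Set.inter_subset_right), ← hUnion]

lemma IsTransversal.ncard_eq [Finite α] (h𝒞 : (𝒞 : Set (Set α)).PairwiseDisjoint id)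
    (hL : L ⊆ ⋃₀ 𝒞) (hA : IsTransversal 𝒞 L A) : A.ncard = 𝒞.card := by
  rw [ncard_eq_sum_ncard_inter h𝒞 (hA.1.trans hL), Finset.card_eq_sum_ones]
  refine Finset.sum_congr rfl fun C hC => ?_
  obtain ⟨a, ha⟩ := hA.2 C hC
  rw [ha, Set.ncard_singleton]

lemma exists_inter_eq_empty_and_one_lt_ncard [Finite α]
    (h𝒞 : (𝒞 : Set (Set α)).PairwiseDisjoint id) (hA : A ⊆ L) (hL : L ⊆ ⋃₀ 𝒞)
    (hcard : A.ncard = 𝒞.card) (hAT : ¬ IsTransversal 𝒞 L A) :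
    (∃ C ∈ 𝒞, A ∩ C = ∅) ∧ ∃ C ∈ 𝒞, 1 < (A ∩ C).ncard := by
  have hsum : ∑ C ∈ 𝒞, (A ∩ C).ncard = ∑ C ∈ 𝒞, 1 := by
    rw [← ncard_eq_sum_ncard_inter h𝒞 (hA.trans hL), hcard, Finset.card_eq_sum_ones]
  obtain ⟨C₀, hC₀, hne⟩ : ∃ C ∈ 𝒞, (A ∩ C).ncard ≠ 1 := by
    by_contra! h
    exact hAT ⟨hA, fun C hC => Set.ncard_eq_one.mp (h C hC)⟩
  have hempty : ∃ C ∈ 𝒞, (A ∩ C).ncard = 0 := by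
    by_contra! h
    have := Finset.sum_lt_sum (fun C hC => Nat.one_le_iff_ne_zero.mpr (h C hC))
      ⟨C₀, hC₀, lt_of_le_of_ne (Nat.one_le_iff_ne_zero.mpr (h C₀ hC₀)) hne.symm⟩
    omega
  obtain ⟨C₁, hC₁, hC₁0⟩ := hempty
  refine ⟨⟨C₁, hC₁, (Set.ncard_eq_zero (Set.toFinite _)).mp hC₁0⟩, ?_⟩
  by_contra! h
  have := Finset.sum_lt_sum h ⟨C₁, hC₁, by omega⟩
  omega

lemma IsTransversal.swap (h𝒞 : (𝒞 : Set (Set α)).PairwiseDisjoint id)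
    (hA : IsTransversal 𝒞 L A) {C : Set α} (hC : C ∈ 𝒞) {a b : α} (ha : a ∈ A ∩ C)
    (hb : b ∈ C ∩ L) : IsTransversal 𝒞 L (insert b (A \ {a})) := by
  refine ⟨Set.insert_subset hb.2 (Set.sdiff_subset.trans hA.1), fun D hD => ?_⟩
  obtain ⟨a', ha'⟩ := hA.2 D hD
  by_cases hDC : D = C
  · subst hDC
    refine ⟨b, Set.eq_singleton_iff_unique_mem.mpr ⟨⟨Set.mem_insert _ _, hb.1⟩, ?_⟩⟩
    rintro z ⟨rfl | ⟨hzA, hza⟩, hzD⟩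
    · rfl
    · have h1 : z ∈ A ∩ D := ⟨hzA, hzD⟩
      rw [ha'] at ha h1
      exact absurd (h1.trans ha.symm) hza
  · have hdisj := h𝒞 hD hC hDC
    refine ⟨a', Eq.trans ?_ ha'⟩
    ext z
    simp only [Set.mem_inter_iff, Set.mem_insert_iff, Set.mem_sdiff, Set.mem_singleton_iff]
    constructor
    · rintro ⟨rfl | ⟨hzA, -⟩, hzD⟩
      · exact absurd hb.1 (Set.disjoint_left.mp hdisj hzD)
      · exact ⟨hzA, hzD⟩
    · rintro ⟨hzA, hzD⟩
      exact ⟨Or.inr ⟨hzA, fun hza => Set.disjoint_left.mp hdisj hzD (hza ▸ ha.2)⟩, hzD⟩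

lemma IsTransversal.eq_of_subset (hL : L ⊆ ⋃₀ 𝒞) (hA : IsTransversal 𝒞 L A)
    (hB : IsTransversal 𝒞 L B) (hAB : A ⊆ B) : A = B := by
  refine hAB.antisymm fun b hb => ?_
  obtain ⟨C, hC, hbC⟩ := hL (hB.1 hb)
  obtain ⟨a, ha⟩ := hA.2 C hC
  obtain ⟨b', hb'⟩ := hB.2 C hC
  have haA : a ∈ A ∩ C := ha ▸ rfl
  have hab : a = b := by
    have h1 : a ∈ B ∩ C := ⟨hAB haA.1, haA.2⟩
    have h2 : b ∈ B ∩ C := ⟨hb, hbC⟩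
    rw [hb'] at h1 h2
    exact h1.trans h2.symm
  exact hab ▸ haA.1

lemma IsTransversal.apply_eq_of_swap {β : Type*} [Finite α]
    (h𝒞 : (𝒞 : Set (Set α)).PairwiseDisjoint id) (hL : L ⊆ ⋃₀ 𝒞) {f : Set α → β}
    (hf : ∀ A, IsTransversal 𝒞 L A → ∀ C ∈ 𝒞, ∀ a ∈ A ∩ C, ∀ b ∈ C ∩ L,
      f (insert b (A \ {a})) = f A)
    (hA : IsTransversal 𝒞 L A) (hB : IsTransversal 𝒞 L B) : f A = f B := by
  induction hn : (A \ B).ncard generalizing A with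
  | zero =>
    have hAB : A \ B = ∅ := (Set.ncard_eq_zero (Set.toFinite _)).mp hn
    rw [hA.eq_of_subset hL hB (Set.sdiff_eq_empty.mp hAB)]
  | succ n ih =>
    obtain ⟨a, haA, haB⟩ : (A \ B).Nonempty := Set.nonempty_of_ncard_ne_zero (by omega)
    obtain ⟨C, hC, haC⟩ := hL (hA.1 haA)
    obtain ⟨b, hb⟩ := hB.2 C hC
    have hbB : b ∈ B ∩ C := hb ▸ rfl
    have hbL : b ∈ C ∩ L := ⟨hbB.2, hB.1 hbB.1⟩
    rw [← hf A hA C hC a ⟨haA, haC⟩ b hbL]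
    refine ih (hA.swap h𝒞 hC ⟨haA, haC⟩ hbL) ?_
    have : insert b (A \ {a}) \ B = (A \ B) \ {a} := by
      rw [Set.insert_sdiff_of_mem _ hbB.1, Set.sdiff_sdiff_comm]
    rw [this, Set.ncard_sdiff_singleton_of_mem (show a ∈ A \ B from ⟨haA, haB⟩), hn,
      Nat.add_sub_cancel]

lemma ncard_setOf_isTransversal [Finite α] (h𝒞 : (𝒞 : Set (Set α)).PairwiseDisjoint id)
    (hL : L ⊆ ⋃₀ 𝒞) :
    {A | IsTransversal 𝒞 L A}.ncard = ∏ C ∈ 𝒞, (C ∩ L).ncard := by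
  set Φ : (∀ C : 𝒞, ↥((C : Set α) ∩ L)) → Set α := fun f => Set.range fun C => (f C : α)
  have heq_of_mem : ∀ (f : ∀ C : 𝒞, ↥((C : Set α) ∩ L)) C (D : 𝒞),
      (f C : α) ∈ (D : Set α) → C = D := fun f C D h =>
    Subtype.ext (h𝒞.elim C.2 D.2 (Set.not_disjoint_iff.mpr ⟨_, (f C).2.1, h⟩))
  have hinj : Function.Injective Φ := by
    intro f g hfg
    funext C
    obtain ⟨D, hD⟩ : (f C : α) ∈ Φ g := hfg ▸ ⟨C, rfl⟩
    obtain rfl := heq_of_mem f C D (hD ▸ (g D).2.1)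
    exact Subtype.ext hD.symm
  have hrange : Set.range Φ = {A | IsTransversal 𝒞 L A} := by
    ext A
    constructor
    · rintro ⟨f, rfl⟩
      refine ⟨Set.range_subset_iff.mpr fun C => (f C).2.2, fun D hD => ⟨f ⟨D, hD⟩, ?_⟩⟩
      refine Set.eq_singleton_iff_unique_mem.mpr ⟨⟨⟨_, rfl⟩, (f ⟨D, hD⟩).2.1⟩, ?_⟩
      rintro _ ⟨⟨C, rfl⟩, hCD⟩
      rw [heq_of_mem f C ⟨D, hD⟩ hCD]
    · intro hA
      choose g hg using fun C : 𝒞 => hA.2 C C.2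
      have hgA : ∀ C : 𝒞, g C ∈ A ∩ C := fun C => (hg C).symm ▸ rfl
      refine ⟨fun C => ⟨g C, (hgA C).2, hA.1 (hgA C).1⟩, ?_⟩
      refine (Set.range_subset_iff.mpr fun C => (hgA C).1).antisymm fun a ha => ?_
      obtain ⟨C, hC, haC⟩ := hL (hA.1 ha)
      have : a ∈ A ∩ C := ⟨ha, haC⟩
      rw [hg ⟨C, hC⟩] at this
      exact ⟨⟨C, hC⟩, this.symm⟩
  rw [← hrange, ← Set.image_univ, Set.ncard_image_of_injective _ hinj, Set.ncard_univ,
    Nat.card_pi, ← Finset.prod_coe_sort 𝒞]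
  simp only [Nat.card_coe_set_eq]

end Transversal

lemma setOf_isMaxOn_eq {β γ : Type*} [LinearOrder γ] {f : β → γ} {s t : Set β}
    (hs : s.Finite) (hts : t ⊆ s) (hf : ∀ a ∈ t, ∀ b ∈ t, f a = f b)
    (himprove : ∀ a ∈ s, a ∉ t → ∃ b ∈ s, f a < f b) :
    {a | a ∈ s ∧ IsMaxOn f s a} = t := by
  have hmax : ∀ a ∈ s, IsMaxOn f s a → a ∈ t := fun a ha hmax => by
    by_contra hat
    obtain ⟨b, hb, hlt⟩ := himprove a ha hat
    exact (isMaxOn_iff.mp hmax b hb).not_gt hlt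
  refine Set.Subset.antisymm (fun a ha => hmax a ha.1 ha.2) fun a ha => ⟨hts ha, ?_⟩
  obtain ⟨m, hm, hmmax⟩ := Set.exists_max_image s f hs ⟨a, hts ha⟩
  rw [isMaxOn_iff, ← hf m (hmax m hm (isMaxOn_iff.mpr hmmax)) a ha]
  exact hmmax

open Finset

namespace PhyloTree

variable {V : Type} [Fintype V] [DecidableEq V] (T : PhyloTree V) {u v w x y : V}

lemma step_ne_root (h : T.step u v) : u ≠ T.root := by
  rintro rfl
  simp [step, T.parent_root] at h

lemma step_unique (h₁ : T.step u v) (h₂ : T.step u w) : v = w :=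
  Option.some.inj (h₁.symm.trans h₂)

lemma hgt_lt_of_step (h : T.step u v) : T.hgt v < T.hgt u := by
  linarith [T.hgt_eq u v h, T.len_pos u (T.step_ne_root h)]

lemma anc_refl (v : V) : T.anc v v := .refl

lemma anc_trans (h₁ : T.anc u v) (h₂ : T.anc v w) : T.anc u w := h₂.trans h₁

lemma anc_of_step (h : T.step u v) : T.anc v u := .single h

lemma anc_root (v : V) : T.anc T.root v := T.reaches_root v

lemma anc_iff_of_step (h : T.step v w) : T.anc u v ↔ u = v ∨ T.anc u w := by
  refine ⟨fun huv => ?_, ?_⟩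
  · rcases Relation.ReflTransGen.cases_head huv with rfl | ⟨c, hc, hcu⟩
    · exact .inl rfl
    · exact .inr (T.step_unique h hc ▸ hcu)
  · rintro (rfl | huw)
    · exact T.anc_refl u
    · exact huw.head h

lemma hgt_le_of_anc (h : T.anc u v) : T.hgt u ≤ T.hgt v := by
  induction h with
  | refl => rfl
  | tail _ hstep ih => exact (T.hgt_lt_of_step hstep).le.trans ih

lemma hgt_lt_of_anc_of_ne (h : T.anc u v) (hne : u ≠ v) : T.hgt u < T.hgt v := by
  rcases Relation.ReflTransGen.cases_tail h with rfl | ⟨c, hvc, hcu⟩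
  · exact absurd rfl hne
  · exact (T.hgt_lt_of_step hcu).trans_le (T.hgt_le_of_anc hvc)

lemma anc_antisymm (h₁ : T.anc u v) (h₂ : T.anc v u) : u = v := by
  by_contra hne
  exact (T.hgt_lt_of_anc_of_ne h₁ hne).not_ge (T.hgt_le_of_anc h₂)

lemma eq_root_of_anc_root (h : T.anc u T.root) : u = T.root :=
  T.anc_antisymm h (T.anc_root u)

lemma anc_or_anc_of_anc (hu : T.anc u x) (hw : T.anc w x) : T.anc u w ∨ T.anc w u := by
  induction hu using Relation.ReflTransGen.head_induction_on generalizing w with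
  | refl => exact .inr hw
  | @head a c hac hcu ih =>
    rcases (T.anc_iff_of_step hac).mp hw with rfl | hwc
    · exact .inl (hcu.head hac)
    · exact ih hwc

lemma exists_leaf_anc (v : V) : ∃ x, T.IsLeaf x ∧ T.anc v x := by
  obtain ⟨x, hx, hmax⟩ := exists_max_image (univ.filter (T.anc v)) T.hgt
    ⟨v, mem_filter.mpr ⟨mem_univ _, T.anc_refl v⟩⟩
  rw [mem_filter] at hx
  refine ⟨x, fun u hu => ?_, hx.2⟩
  have := hmax u (mem_filter.mpr ⟨mem_univ _, T.anc_trans hx.2 (T.anc_of_step hu)⟩)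
  exact (T.hgt_lt_of_step hu).not_ge this

lemma sum_len_path (h : T.anc u y) :
    ∑ v ∈ univ.filter (fun v => T.anc u v ∧ v ≠ u ∧ T.anc v y), T.len v =
      T.hgt y - T.hgt u := by
  induction h using Relation.ReflTransGen.head_induction_on with
  | refl =>
    rw [filter_false_of_mem fun v _ ⟨h₁, hne, h₂⟩ => hne (T.anc_antisymm h₂ h₁), sum_empty,
      sub_self]
  | @head a c hac hcu ih =>
    have hca := T.hgt_lt_of_step hac
    have hau : a ≠ u := by
      rintro rfl
      exact (T.hgt_le_of_anc hcu).not_gt hca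
    have hsplit : univ.filter (fun v => T.anc u v ∧ v ≠ u ∧ T.anc v a) =
        insert a (univ.filter fun v => T.anc u v ∧ v ≠ u ∧ T.anc v c) := by
      ext v
      simp only [mem_filter, mem_univ, true_and, mem_insert, T.anc_iff_of_step hac]
      constructor
      · rintro ⟨h₁, h₂, rfl | h₃⟩
        · exact .inl rfl
        · exact .inr ⟨h₁, h₂, h₃⟩
      · rintro (rfl | ⟨h₁, h₂, h₃⟩)
        · exact ⟨hcu.head hac, hau, .inl rfl⟩
        · exact ⟨h₁, h₂, .inr h₃⟩
    have hnot : a ∉ univ.filter fun v => T.anc u v ∧ v ≠ u ∧ T.anc v c := by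
      simp only [mem_filter, mem_univ, true_and, not_and]
      exact fun _ _ hac' => (T.hgt_le_of_anc hac').not_gt hca
    rw [hsplit, sum_insert hnot, ih, T.hgt_eq a c hac]
    ring

def Spans (Y : Set V) (v : V) : Prop := ∃ x ∈ Y, T.IsLeaf x ∧ T.anc v x

lemma PD_eq_sum (Y : Set V) :
    T.PD Y = ∑ v, if v ≠ T.root ∧ T.Spans Y v then T.len v else 0 := by
  unfold PD Spans
  exact sum_congr rfl fun v _ => by congr

variable {T} {Y : Set V}

lemma Spans.of_anc (h : T.Spans Y v) (huv : T.anc u v) : T.Spans Y u :=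
  let ⟨x, hxY, hx, hvx⟩ := h
  ⟨x, hxY, hx, T.anc_trans huv hvx⟩

lemma Spans.mono {Z : Set V} (h : T.Spans Y v) (hYZ : Y ⊆ Z) : T.Spans Z v :=
  let ⟨x, hxY, hx, hvx⟩ := h
  ⟨x, hYZ hxY, hx, hvx⟩

lemma spans_insert (hx : T.IsLeaf x) : T.Spans (insert x Y) v ↔ T.anc v x ∨ T.Spans Y v := by
  simp only [Spans, Set.mem_insert_iff, exists_eq_or_imp]
  exact or_congr (and_iff_right hx) Iff.rfl

variable (T) in
/-- `w` is where the path from `x` up to the root first meets the subtree spanned by `Y`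
(the root, if there is no such vertex). -/
def IsJunction (Y : Set V) (x w : V) : Prop :=
  T.anc w x ∧ (w = T.root ∨ T.Spans Y w) ∧
    ∀ v, T.anc w v → v ≠ w → T.anc v x → ¬ T.Spans Y v

variable (T) in
lemma exists_isJunction (Y : Set V) (x : V) : ∃ w, T.IsJunction Y x w := by
  obtain ⟨w, hw, hmax⟩ := exists_max_image
    (univ.filter fun w => T.anc w x ∧ (w = T.root ∨ T.Spans Y w)) T.hgt
    ⟨T.root, mem_filter.mpr ⟨mem_univ _, T.anc_root x, .inl rfl⟩⟩
  simp only [mem_filter, mem_univ, true_and] at hw hmax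
  refine ⟨w, hw.1, hw.2, fun v hwv hne hvx hv => ?_⟩
  exact (T.hgt_lt_of_anc_of_ne hwv hne.symm).not_ge (hmax v ⟨hvx, .inr hv⟩)

lemma IsJunction.root_or_spans_of_anc (hw : T.IsJunction Y x w) (hvw : T.anc v w) :
    v = T.root ∨ T.Spans Y v := by
  rcases hw.2.1 with rfl | hw'
  · exact .inl (T.eq_root_of_anc_root hvw)
  · exact .inr (hw'.of_anc hvw)

lemma IsJunction.anc_of_spans (hw : T.IsJunction Y x w) (hux : T.anc u x) (hu : T.Spans Y u) :
    T.anc u w := by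
  refine (T.anc_or_anc_of_anc hux hw.1).elim id fun hwu => ?_
  by_cases huw : u = w
  · exact huw ▸ T.anc_refl u
  · exact absurd hu (hw.2.2 u hwu huw hux)

lemma IsJunction.anc_of_not_spans (hw : T.IsJunction Y x w) (hux : T.anc u x)
    (hu : ¬ T.Spans Y u) : T.anc w u := by
  refine (T.anc_or_anc_of_anc hw.1 hux).elim id fun huw => ?_
  rcases hw.root_or_spans_of_anc huw with rfl | hu'
  · exact hw.2.1.elim (fun h => h ▸ T.anc_root _) fun h => absurd (h.of_anc huw) hu
  · exact absurd hu' hu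

lemma IsJunction.of_anc_of_not_spans {x' : V} (hw : T.IsJunction Y x w) (hux : T.anc u x)
    (hux' : T.anc u x') (hu : ¬ T.Spans Y u) : T.IsJunction Y x' w := by
  have hwu := hw.anc_of_not_spans hux hu
  refine ⟨T.anc_trans hwu hux', hw.2.1, fun v hwv hne hvx' hv => ?_⟩
  rcases T.anc_or_anc_of_anc hux' hvx' with huv | hvu
  · exact hu (hv.of_anc huv)
  · exact hw.2.2 v hwv hne (T.anc_trans hvu hux) hv

lemma PD_insert (hx : T.IsLeaf x) :
    T.PD (insert x Y) = T.PD Y +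
      ∑ v ∈ univ.filter (fun v => v ≠ T.root ∧ T.anc v x ∧ ¬ T.Spans Y v), T.len v := by
  rw [PD_eq_sum, PD_eq_sum, sum_filter, ← sum_add_distrib]
  refine sum_congr rfl fun v _ => ?_
  rw [spans_insert hx]
  by_cases h₁ : v ≠ T.root <;> by_cases h₂ : T.anc v x <;> by_cases h₃ : T.Spans Y v <;>
    simp [h₁, h₂, h₃]

lemma PD_insert_of_isJunction (hx : T.IsLeaf x) (hw : T.IsJunction Y x w) :
    T.PD (insert x Y) = T.PD Y + (T.hgt x - T.hgt w) := by
  rw [PD_insert hx, ← T.sum_len_path hw.1]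
  congr 1
  refine sum_congr (ext fun v => ?_) fun _ _ => rfl
  simp only [mem_filter, mem_univ, true_and]
  constructor
  · rintro ⟨hroot, hvx, hv⟩
    have hvw : ¬ T.anc v w := fun hvw => (hw.root_or_spans_of_anc hvw).elim hroot hv
    refine ⟨(T.anc_or_anc_of_anc hvx hw.1).resolve_left hvw, ?_, hvx⟩
    rintro rfl
    exact hvw (T.anc_refl v)
  · rintro ⟨hwv, hne, hvx⟩
    refine ⟨?_, hvx, hw.2.2 v hwv hne hvx⟩
    rintro rfl
    exact hne (T.eq_root_of_anc_root hwv).symm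

lemma PD_insert_swap (hU : T.Ultrametric) {x' : V} (hx : T.IsLeaf x) (hx' : T.IsLeaf x')
    (hux : T.anc u x) (hux' : T.anc u x') (hu : ¬ T.Spans Y u) :
    T.PD (insert x Y) = T.PD (insert x' Y) := by
  obtain ⟨w, hw⟩ := T.exists_isJunction Y x
  rw [PD_insert_of_isJunction hx hw,
    PD_insert_of_isJunction hx' (hw.of_anc_of_not_spans hux hux' hu), hU x x' hx hx']

lemma PD_add_le_PD_insert_sdiff {y' y'' r p : V} (hy' : y' ∈ Y) (hy'' : y'' ∈ Y)
    (hne : y'' ≠ y') (hy'l : T.IsLeaf y') (hy''l : T.IsLeaf y'') (huy' : T.anc u y')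
    (huy'' : T.anc u y'') (hx : T.IsLeaf x) (hrx : T.anc r x) (hrp : T.step r p)
    (hr : ¬ T.Spans Y r) :
    T.PD Y + (T.hgt x - T.hgt p) - (T.hgt y' - T.hgt u) ≤ T.PD (insert x (Y \ {y'})) := by
  set Z := Y \ {y'}
  obtain ⟨w', hw'⟩ := T.exists_isJunction Z y'
  obtain ⟨w, hw⟩ := T.exists_isJunction Z x
  have hZr : ¬ T.Spans Z r := fun h => hr (h.mono Set.sdiff_subset)
  have huw' : T.anc u w' := hw'.anc_of_spans huy' ⟨y'', ⟨hy'', hne⟩, hy''l, huy''⟩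
  have hwp : T.anc w p := by
    refine ((T.anc_iff_of_step hrp).mp (hw.anc_of_not_spans hrx hZr)).resolve_left ?_
    rintro rfl
    exact hw.2.1.elim (T.step_ne_root hrp) hZr
  have hY : T.PD Y = T.PD Z + (T.hgt y' - T.hgt w') := by
    rw [← PD_insert_of_isJunction hy'l hw', Set.insert_sdiff_singleton, Set.insert_eq_of_mem hy']
  rw [PD_insert_of_isJunction hx hw, hY]
  linarith [T.hgt_le_of_anc huw', T.hgt_le_of_anc hwp]

variable (T) in
def clade (r : V) : Set V := {v | T.anc r v}

variable (T) in
def IsDescClosed (S : Set V) : Prop := ∀ ⦃u v⦄, u ∈ S → T.anc u v → v ∈ S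

variable (T) in
def IsTop (S : Set V) (r : V) : Prop := r ∈ S ∧ ∀ p, T.parent r = some p → p ∉ S

variable {S : Set V} {r r' : V}

lemma exists_isTop_anc (hv : v ∈ S) : ∃ r, T.IsTop S r ∧ T.anc r v := by
  obtain ⟨r, hr, hmin⟩ := exists_min_image (univ.filter fun r => r ∈ S ∧ T.anc r v) T.hgt
    ⟨v, mem_filter.mpr ⟨mem_univ _, hv, T.anc_refl v⟩⟩
  simp only [mem_filter, mem_univ, true_and, and_imp] at hr hmin
  refine ⟨r, ⟨hr.1, fun p hp hpS => ?_⟩, hr.2⟩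
  exact (T.hgt_lt_of_step hp).not_ge (hmin p hpS (T.anc_trans (T.anc_of_step hp) hr.2))

lemma IsTop.eq_of_anc (hS : T.IsDescClosed S) (hr : T.IsTop S r) (hu : u ∈ S)
    (hur : T.anc u r) : u = r := by
  rcases Relation.ReflTransGen.cases_head hur with h | ⟨p, hp, hup⟩
  · exact h.symm
  · exact absurd (hS hu hup) (hr.2 p hp)

lemma IsTop.eq_of_anc_of_anc (hS : T.IsDescClosed S) (hr : T.IsTop S r) (hr' : T.IsTop S r')
    (hrv : T.anc r v) (hr'v : T.anc r' v) : r = r' :=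
  (T.anc_or_anc_of_anc hrv hr'v).elim (hr'.eq_of_anc hS hr.1) fun h =>
    (hr.eq_of_anc hS hr'.1 h).symm

lemma reflTransGen_adjIn_of_anc (hS : T.IsDescClosed S) (hu : u ∈ S) (huv : T.anc u v) :
    Relation.ReflTransGen (T.adjIn S) u v := by
  induction huv using Relation.ReflTransGen.head_induction_on with
  | refl => rfl
  | @head a c hac hcu ih => exact ih.tail ⟨hS hu hcu, hS hu (hcu.head hac), .inr hac⟩

lemma IsTop.anc_of_adjIn (hr : T.IsTop S r) {a b : V} (ha : T.anc r a) (hab : T.adjIn S a b) :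
    T.anc r b := by
  rcases hab.2.2 with hab' | hba
  · rcases (T.anc_iff_of_step hab').mp ha with rfl | hrb
    · exact absurd hab.2.1 (hr.2 b hab')
    · exact hrb
  · exact T.anc_trans ha (T.anc_of_step hba)

lemma IsTop.reflTransGen_adjIn_iff (hS : T.IsDescClosed S) (hr : T.IsTop S r) :
    Relation.ReflTransGen (T.adjIn S) r v ↔ T.anc r v := by
  refine ⟨fun h => ?_, T.reflTransGen_adjIn_of_anc hS hr.1⟩
  induction h with
  | refl => exact T.anc_refl r
  | tail _ hab ih => exact hr.anc_of_adjIn ih hab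

lemma mem_components_iff (hS : T.IsDescClosed S) {C : Set V} :
    C ∈ T.components S ↔ ∃ r, T.IsTop S r ∧ C = T.clade r := by
  have hcomp : ∀ r, T.IsTop S r →
      S ∩ {u | Relation.ReflTransGen (T.adjIn S) r u} = T.clade r := fun r hr => by
    ext u
    simp only [Set.mem_inter_iff, Set.mem_ofPred_eq, hr.reflTransGen_adjIn_iff hS, clade]
    exact and_iff_right_of_imp (hS hr.1)
  constructor
  · rintro ⟨v, hv, rfl⟩
    obtain ⟨r, hr, hrv⟩ := exists_isTop_anc hv
    have hsymm : Std.Symm (T.adjIn S) := ⟨fun _ _ h => ⟨h.2.1, h.1, h.2.2.symm⟩⟩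
    have hrv' := T.reflTransGen_adjIn_of_anc hS hr.1 hrv
    refine ⟨r, hr, Eq.trans ?_ (hcomp r hr)⟩
    ext u
    exact and_congr_right fun _ => ⟨hrv'.trans, (Std.Symm.symm _ _ hrv').trans⟩
  · rintro ⟨r, hr, rfl⟩
    exact ⟨r, hr.1, (hcomp r hr).symm⟩

lemma pairwiseDisjoint_components (hS : T.IsDescClosed S) :
    (T.components S).PairwiseDisjoint id := by
  intro C hC C' hC' hne
  obtain ⟨r, hr, rfl⟩ := (mem_components_iff hS).mp hC
  obtain ⟨r', hr', rfl⟩ := (mem_components_iff hS).mp hC'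
  refine Set.disjoint_left.mpr fun v hv hv' => hne ?_
  rw [hr.eq_of_anc_of_anc hS hr' hv hv']

lemma subset_sUnion_components (hS : T.IsDescClosed S) {L : Set V} (hL : L ⊆ S) :
    L ⊆ ⋃₀ T.components S := fun v hv => by
  obtain ⟨r, hr, hrv⟩ := exists_isTop_anc (hL hv)
  exact ⟨T.clade r, (mem_components_iff hS).mpr ⟨r, hr, rfl⟩, hrv⟩

variable {d : ℝ}

lemma R_mono {e : ℝ} (hde : d ≤ e) : T.R d ⊆ T.R e :=
  fun _ ⟨x, hx, hvx, hle⟩ => ⟨x, hx, hvx, hle.trans hde⟩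

lemma leaves_subset_R (hd : 0 ≤ d) : T.leaves ⊆ T.R d :=
  fun x hx => ⟨x, hx, T.anc_refl x, by rwa [sub_self]⟩

lemma lt_hgt_sub_of_notMem_R (hv : v ∉ T.R d) (hy : T.IsLeaf y) (hvy : T.anc v y) :
    d < T.hgt y - T.hgt v :=
  lt_of_not_ge fun h => hv ⟨y, hy, hvy, h⟩

lemma hgt_sub_le_of_mem_R (hU : T.Ultrametric) (hv : v ∈ T.R d) (hy : T.IsLeaf y) :
    T.hgt y - T.hgt v ≤ d := by
  obtain ⟨x, hx, -, hxv⟩ := hv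
  rwa [hU y x hy hx]

lemma isDescClosed_R (hU : T.Ultrametric) : T.IsDescClosed (T.R d) := fun u v hu huv => by
  obtain ⟨y, hy, hvy⟩ := T.exists_leaf_anc v
  exact ⟨y, hy, hvy, by linarith [hgt_sub_le_of_mem_R hU hu hy, T.hgt_le_of_anc huv]⟩

lemma exists_hgt_sub_R_eq (hd : 0 ≤ d) :
    ∃ u v : V, 0 ≤ T.hgt u - T.hgt v ∧ T.hgt u - T.hgt v ≤ d ∧
      T.R (T.hgt u - T.hgt v) = T.R d := by
  obtain ⟨q, hq, hmax⟩ := exists_max_image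
    (univ.filter fun q : V × V => 0 ≤ T.hgt q.1 - T.hgt q.2 ∧ T.hgt q.1 - T.hgt q.2 ≤ d)
    (fun q => T.hgt q.1 - T.hgt q.2) ⟨(T.root, T.root), by simpa using hd⟩
  simp only [mem_filter, mem_univ, true_and, and_imp, Prod.forall] at hq hmax
  refine ⟨q.1, q.2, hq.1, hq.2, (R_mono hq.2).antisymm fun v ⟨x, hx, hvx, hle⟩ => ?_⟩
  exact ⟨x, hx, hvx, hmax x v (by linarith [T.hgt_le_of_anc hvx]) hle⟩

lemma branchDist_nonneg_and_ccount_eq {k : ℕ} (hk : T.IsBranchingValue k) :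
    0 ≤ T.branchDist k ∧ T.ccount (T.branchDist k) = k := by
  set D := {d : ℝ | 0 ≤ d ∧ T.ccount d = k}
  -- `R d` does not change when `d` is lowered to the largest vertex-height difference `≤ d`,
  -- so `D` is controlled by its elements in a finite set and its infimum is attained.
  have hcrit : ∀ d ∈ D,
      ∃ e ∈ D ∩ Set.range (fun q : V × V => T.hgt q.1 - T.hgt q.2), e ≤ d := by
    rintro d ⟨hd, hdk⟩
    obtain ⟨u, v, he, hed, hR⟩ := exists_hgt_sub_R_eq (T := T) hd
    exact ⟨_, ⟨⟨he, by rw [← hdk, ccount, ccount, hR]⟩, ⟨(u, v), rfl⟩⟩, hed⟩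
  obtain ⟨d₀, hd₀⟩ := hk
  obtain ⟨e₀, he₀, -⟩ := hcrit d₀ hd₀
  obtain ⟨m, hm, hmin⟩ := Set.exists_min_image _ id
    ((Set.finite_range _).inter_of_right D) ⟨e₀, he₀⟩
  have hleast : IsLeast D m := ⟨hm.1, fun d hd => by
    obtain ⟨e, he, hed⟩ := hcrit d hd
    exact (hmin e he).trans hed⟩
  rw [branchDist, hleast.csInf_eq]
  exact hm.1

variable (T) in
abbrev componentFinset (d : ℝ) : Finset (Set V) := (T.components (T.R d)).toFinite.toFinset

lemma pairwiseDisjoint_componentFinset (hU : T.Ultrametric) :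
    (T.componentFinset d : Set (Set V)).PairwiseDisjoint id := by
  simpa using pairwiseDisjoint_components (isDescClosed_R hU)

lemma leaves_subset_sUnion_componentFinset (hU : T.Ultrametric) (hd : 0 ≤ d) :
    T.leaves ⊆ ⋃₀ (T.componentFinset d : Set (Set V)) := by
  simpa using subset_sUnion_components (isDescClosed_R hU) (leaves_subset_R hd)

lemma mem_componentFinset_iff (hU : T.Ultrametric) {C : Set V} :
    C ∈ T.componentFinset d ↔ ∃ r, T.IsTop (T.R d) r ∧ C = T.clade r :=
  (Set.Finite.mem_toFinset _).trans (mem_components_iff (isDescClosed_R hU))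

variable {A : Set V}

lemma PD_insert_sdiff_eq (hU : T.Ultrametric) {a b : V} (hA : A ⊆ T.leaves)
    (hAr : A ∩ T.clade r = {a}) (hb : b ∈ T.clade r ∩ T.leaves) :
    T.PD (insert b (A \ {a})) = T.PD A := by
  have ha : a ∈ A ∩ T.clade r := hAr ▸ rfl
  have hr : ¬ T.Spans (A \ {a}) r := fun ⟨z, hz, _, hrz⟩ =>
    hz.2 (show z ∈ ({a} : Set V) from hAr ▸ ⟨hz.1, hrz⟩)
  rw [PD_insert_swap hU hb.2 (hA ha.1) hb.1 ha.2 hr, Set.insert_sdiff_singleton,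
    Set.insert_eq_of_mem ha.1]

lemma exists_PD_lt_of_not_isTransversal (hU : T.Ultrametric) (hd : 0 ≤ d) (hA : A ⊆ T.leaves)
    (hcard : A.ncard = (T.componentFinset d).card)
    (hAT : ¬ IsTransversal (T.componentFinset d) T.leaves A) :
    ∃ B, (B ⊆ T.leaves ∧ B.ncard = A.ncard) ∧ T.PD A < T.PD B := by
  obtain ⟨⟨C, hC, hAC⟩, C', hC', hAC'⟩ := exists_inter_eq_empty_and_one_lt_ncard
    (pairwiseDisjoint_componentFinset hU) hA (leaves_subset_sUnion_componentFinset hU hd)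
    hcard hAT
  obtain ⟨r, hr, rfl⟩ := (mem_componentFinset_iff hU).mp hC
  obtain ⟨r', hr', rfl⟩ := (mem_componentFinset_iff hU).mp hC'
  obtain ⟨y', hy', y'', hy'', hne⟩ := (Set.one_lt_ncard (Set.toFinite _)).mp hAC'
  have hAr : ¬ T.Spans A r := fun ⟨z, hz, _, hrz⟩ =>
    (show z ∈ (∅ : Set V) from hAC ▸ ⟨hz, hrz⟩)
  obtain ⟨p, hp⟩ : ∃ p, T.step r p := Option.isSome_iff_exists.mp <| T.parent_isSome r <| by
    rintro rfl
    exact hAr ⟨y', hy'.1, hA hy'.1, T.anc_root y'⟩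
  obtain ⟨x, hx, hrx⟩ := T.exists_leaf_anc r
  have hxA : x ∉ A \ {y'} := fun hxA => hAr ⟨x, hxA.1, hx, hrx⟩
  refine ⟨insert x (A \ {y'}), ⟨Set.insert_subset hx (Set.sdiff_subset.trans hA), ?_⟩, ?_⟩
  · rw [Set.ncard_insert_of_notMem hxA, Set.ncard_sdiff_singleton_of_mem hy'.1]
    have := (Set.ncard_pos (Set.toFinite A)).mpr ⟨y', hy'.1⟩
    omega
  · have hmove := PD_add_le_PD_insert_sdiff hy'.1 hy''.1 (Ne.symm hne) (hA hy'.1) (hA hy''.1)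
      hy'.2 hy''.2 hx hrx hp hAr
    have hin := hgt_sub_le_of_mem_R hU hr'.1 (hA hy'.1)
    have hout := lt_hgt_sub_of_notMem_R (hr.2 p hp) hx (T.anc_trans (T.anc_of_step hp) hrx)
    linarith

lemma setOf_isMaxPD_eq {k : ℕ} (hU : T.Ultrametric) (hd : 0 ≤ d) (hk : T.ccount d = k) :
    {A | T.IsMaxPD k A} = {A | IsTransversal (T.componentFinset d) T.leaves A} := by
  have hdisj := pairwiseDisjoint_componentFinset (T := T) (d := d) hU
  have hcover := leaves_subset_sUnion_componentFinset hU hd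
  have hswap : ∀ A, IsTransversal (T.componentFinset d) T.leaves A →
      ∀ C ∈ T.componentFinset d, ∀ a ∈ A ∩ C, ∀ b ∈ C ∩ T.leaves,
        T.PD (insert b (A \ {a})) = T.PD A := by
    intro A hA C hC a ha b hb
    obtain ⟨r, -, rfl⟩ := (mem_componentFinset_iff hU).mp hC
    obtain ⟨a', ha'⟩ := hA.2 _ hC
    obtain rfl : a = a' := by rw [← Set.mem_singleton_iff, ← ha']; exact ha
    exact PD_insert_sdiff_eq hU hA.1 ha' hb
  have hmax := setOf_isMaxOn_eq (f := T.PD)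
    (s := {Y | Y ⊆ T.leaves ∧ Y.ncard = (T.componentFinset d).card})
    (t := {A | IsTransversal (T.componentFinset d) T.leaves A}) (Set.toFinite _)
    (fun A hA => ⟨hA.1, hA.ncard_eq hdisj hcover⟩)
    (fun A hA B hB => hA.apply_eq_of_swap hdisj hcover hswap hB)
    (fun A hA hAT => by
      obtain ⟨B, hB, hlt⟩ := exists_PD_lt_of_not_isTransversal hU hd hA.1 hA.2 hAT
      exact ⟨B, ⟨hB.1, hB.2.trans hA.2⟩, hlt⟩)
  rw [← hk, ccount, Set.ncard_eq_toFinset_card _ (Set.toFinite _), ← hmax]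
  ext A
  simp only [IsMaxPD, Set.mem_ofPred_eq, isMaxOn_iff, and_imp, and_assoc]

end PhyloTree

/-- Proposition 1 of the paper.  If `k` is a branching value
of an ultrametric rooted phylogenetic tree `T`, then the number of size-`k`
maxPD sets is the product, over the components `κ` of `T[R(d_k)]`, of the
number of leaves in `κ`. -/
theorem m_eq_prod_leaves_of_components
    {V : Type} [Fintype V] [DecidableEq V] (T : PhyloTree V)
    (hU : T.Ultrametric) (k : ℕ) (hbv : T.IsBranchingValue k) :
    T.m k =
      ∏ C ∈ (T.components (T.R (T.branchDist k))).toFinite.toFinset,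
        (C ∩ T.leaves).ncard := by
  obtain ⟨hd, hk⟩ := T.branchDist_nonneg_and_ccount_eq hbv
  rw [PhyloTree.m, T.setOf_isMaxPD_eq hU hd hk]
  exact ncard_setOf_isTransversal (T.pairwiseDisjoint_componentFinset hU)
    (T.leaves_subset_sUnion_componentFinset hU hd)
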